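/- Let G(x,y,k) = 2ik e^{2ik(y-x)}(ρ(y)-1) + (1/2)(e^{2ik(y-x)} - 1)ρ'(y). If Im k ≥ 0 and ρ - 1 and ρ' are integrable on ℝ, then the Volterra integral equation m(x) = 1 + ∫_x^∞ G(x,y,k) m(y) dy has a unique bounded continuous solution on ℝ, obtained by successive approximations, and m(x) → 1 as x → +∞. -/

import Mathlib

open MeasureTheory Filter

section Aux

open Set

variable {E : Type*} [NormedAddCommGroup E] [NormedSpace ℝ E] [CompleteSpace E]

omit [CompleteSpace E] in
lemma myIoiSplit (φ : ℝ → E) (hφi : ∀ a, IntegrableOn φ (Ioi a)) (a b : ℝ) :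
    ∫ y in Ioi a, φ y = (∫ y in a..b, φ y) + ∫ y in Ioi b, φ y := by
  have key : ∀ c d : ℝ, c ≤ d →
      ∫ y in Ioi c, φ y = (∫ y in c..d, φ y) + ∫ y in Ioi d, φ y := by
    intro c d hcd
    rw [intervalIntegral.integral_of_le hcd, ← setIntegral_union
      (Ioc_disjoint_Ioi le_rfl) measurableSet_Ioi
      ((hφi c).mono_set Ioc_subset_Ioi_self) (hφi d), Ioc_union_Ioi_eq_Ioi hcd]
  rcases le_total a b with h | h
  · exact key a b h
  · rw [key b a h, intervalIntegral.integral_symm]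
    abel

lemma myIoiHasDeriv (φ : ℝ → E) (hφc : Continuous φ) (hφi : ∀ a, IntegrableOn φ (Ioi a))
    (x : ℝ) : HasDerivAt (fun t => ∫ y in Ioi t, φ y) (-φ x) x := by
  have heq : ∀ t : ℝ, ∫ y in Ioi t, φ y
      = (∫ y in Ioi (x - 1), φ y) - ∫ y in (x-1)..t, φ y := by
    intro t
    rw [myIoiSplit φ hφi (x-1) t]; abel
  have hprim : HasDerivAt (fun t => ∫ y in (x-1)..t, φ y) (φ x) x :=
    intervalIntegral.integral_hasDerivAt_right (hφc.intervalIntegrable _ _)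
      (hφc.stronglyMeasurable.stronglyMeasurableAtFilter) hφc.continuousAt
  have := hprim.const_sub (∫ y in Ioi (x - 1), φ y)
  exact this.congr_of_eventuallyEq (Eventually.of_forall heq)

lemma myIoiCont (φ : ℝ → E) (hφc : Continuous φ) (hφi : ∀ a, IntegrableOn φ (Ioi a)) :
    Continuous (fun t => ∫ y in Ioi t, φ y) :=
  continuous_iff_continuousAt.2 fun x => (myIoiHasDeriv φ hφc hφi x).continuousAt

lemma myExpBound (k : ℂ) (hk : 0 ≤ k.im) {x y : ℝ} (hxy : x ≤ y) :
    ‖Complex.exp (2 * Complex.I * k * ((y : ℂ) - (x : ℂ)))‖ ≤ 1 := by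
  rw [Complex.norm_exp, Real.exp_le_one_iff]
  have hc : ((y : ℂ) - (x : ℂ)) = ((y - x : ℝ) : ℂ) := by push_cast; ring
  have : (2 * Complex.I * k * ((y : ℂ) - (x : ℂ))).re = -(2 * k.im * (y - x)) := by
    rw [hc]
    simp [Complex.mul_re, Complex.mul_im]
    try ring
  rw [this]
  nlinarith

end Aux

/-- The Volterra integral equation m(x) = 1 + ∫_x^∞ G(x,y,k) m(y) dy with
G(x,y,k) = 2ik e^{2ik(y-x)}(ρ(y)-1) + (1/2)(e^{2ik(y-x)}-1)ρ'(y), Im k ≥ 0, has a unique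
bounded continuous solution, and m(x) → 1 as x → +∞. -/
theorem volterra_unique_bounded_solution
    (ρ : ℝ → ℝ) (hρ : ContDiff ℝ 1 ρ) (hρpos : ∀ x, 0 < ρ x)
    (h1 : Integrable (fun y => ρ y - 1)) (h2 : Integrable (deriv ρ))
    (k : ℂ) (hk : 0 ≤ k.im)
    (G : ℝ → ℝ → ℂ)
    (hG : ∀ x y, G x y
        = 2 * Complex.I * k * Complex.exp (2 * Complex.I * k * ((y : ℂ) - (x : ℂ)))
            * ((ρ y : ℂ) - 1)
          + (1/2) * (Complex.exp (2 * Complex.I * k * ((y : ℂ) - (x : ℂ))) - 1)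
            * ((deriv ρ y : ℝ) : ℂ)) :
    ∃! m : ℝ → ℂ,
      Continuous m ∧ (∃ C : ℝ, ∀ x, ‖m x‖ ≤ C) ∧
      (∀ x, m x = 1 + ∫ y in Set.Ioi x, G x y * m y) ∧
      Tendsto m atTop (nhds 1) := by
  classical
  -- the dominating function g
  set gf : ℝ → ℝ := fun y => 2 * ‖k‖ * ‖ρ y - 1‖ + ‖deriv ρ y‖ with hgf_def
  have hρ'c : Continuous (deriv ρ) := hρ.continuous_deriv le_rfl
  have hgc : Continuous gf :=
    (continuous_const.mul ((hρ.continuous.sub continuous_const).norm)).add hρ'c.norm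
  have hg0 : ∀ y, 0 ≤ gf y := fun y => by positivity
  have hgi : Integrable gf := (h1.norm.const_mul _).add h2.norm
  have hgIoi : ∀ a, IntegrableOn gf (Set.Ioi a) := fun a => hgi.integrableOn
  -- pointwise bound on the kernel
  have hGb : ∀ x y : ℝ, x ≤ y → ‖G x y‖ ≤ gf y := by
    intro x y hxy
    rw [hG]
    have he : ‖Complex.exp (2 * Complex.I * k * ((y : ℂ) - (x : ℂ)))‖ ≤ 1 :=
      myExpBound k hk hxy
    calc ‖2 * Complex.I * k * Complex.exp (2 * Complex.I * k * ((y : ℂ) - (x : ℂ)))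
            * ((ρ y : ℂ) - 1)
          + (1/2) * (Complex.exp (2 * Complex.I * k * ((y : ℂ) - (x : ℂ))) - 1)
            * ((deriv ρ y : ℝ) : ℂ)‖
        ≤ ‖2 * Complex.I * k * Complex.exp (2 * Complex.I * k * ((y : ℂ) - (x : ℂ)))
            * ((ρ y : ℂ) - 1)‖
          + ‖(1/2) * (Complex.exp (2 * Complex.I * k * ((y : ℂ) - (x : ℂ))) - 1)
            * ((deriv ρ y : ℝ) : ℂ)‖ := norm_add_le _ _
      _ ≤ 2 * ‖k‖ * ‖ρ y - 1‖ + ‖deriv ρ y‖ := by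
          have hb1 : ‖2 * Complex.I * k * Complex.exp (2 * Complex.I * k * ((y:ℂ) - (x:ℂ)))
              * ((ρ y : ℂ) - 1)‖ ≤ 2 * ‖k‖ * ‖ρ y - 1‖ := by
            have hr : ‖((ρ y : ℂ) - 1)‖ = ‖ρ y - 1‖ := by
              rw [show ((ρ y : ℂ) - 1) = ((ρ y - 1 : ℝ) : ℂ) by push_cast; ring,
                Complex.norm_real]
            rw [norm_mul, norm_mul, hr, show ‖2 * Complex.I * k‖ = 2 * ‖k‖ by simp]
            nlinarith [mul_le_mul_of_nonneg_right he (mul_nonneg (mul_nonneg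
              (by norm_num : (0:ℝ) ≤ 2) (norm_nonneg k)) (norm_nonneg (ρ y - 1)))]
          have hb2 : ‖(1/2 : ℂ) * (Complex.exp (2 * Complex.I * k * ((y:ℂ) - (x:ℂ))) - 1)
              * ((deriv ρ y : ℝ) : ℂ)‖ ≤ ‖deriv ρ y‖ := by
            rw [norm_mul, norm_mul, Complex.norm_real]
            have hee : ‖Complex.exp (2 * Complex.I * k * ((y:ℂ) - (x:ℂ))) - 1‖ ≤ 2 := by
              calc ‖Complex.exp (2 * Complex.I * k * ((y:ℂ) - (x:ℂ))) - 1‖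
                  ≤ ‖Complex.exp (2 * Complex.I * k * ((y:ℂ) - (x:ℂ)))‖ + ‖(1:ℂ)‖ :=
                    norm_sub_le _ _
                _ ≤ 2 := by rw [norm_one]; linarith
            rw [show ‖(1/2 : ℂ)‖ = 1/2 by norm_num]
            nlinarith [mul_le_mul_of_nonneg_right hee (norm_nonneg (deriv ρ y)),
              norm_nonneg (deriv ρ y)]
          linarith
  -- the tail function h and weight w
  set hfun : ℝ → ℝ := fun x => ∫ y in Set.Ioi x, gf y with hh_def
  have hhd : ∀ x, HasDerivAt hfun (-gf x) x := myIoiHasDeriv gf hgc hgIoi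
  have hhc : Continuous hfun := myIoiCont gf hgc hgIoi
  have hh0 : ∀ x, 0 ≤ hfun x := fun x =>
    setIntegral_nonneg measurableSet_Ioi fun y _ => hg0 y
  set H : ℝ := ∫ y, gf y with hH_def
  have hhH : ∀ x, hfun x ≤ H := fun x =>
    setIntegral_le_integral hgi (Eventually.of_forall hg0)
  have hhtop : Tendsto hfun atTop (nhds 0) := by
    have h0 : Tendsto (fun b => ∫ y in (0:ℝ)..b, gf y) atTop (nhds (hfun 0)) :=
      intervalIntegral_tendsto_integral_Ioi 0 (hgIoi 0) tendsto_id
    have heq : ∀ b, hfun b = hfun 0 - ∫ y in (0:ℝ)..b, gf y := by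
      intro b
      have := myIoiSplit gf hgIoi 0 b
      show (∫ y in Set.Ioi b, gf y) = (∫ y in Set.Ioi 0, gf y) - _
      linarith [this]
    have := (tendsto_const_nhds (x := hfun 0) (f := atTop)).sub h0
    rw [sub_self] at this
    exact this.congr fun b => (heq b).symm
  set w : ℝ → ℝ := fun x => Real.exp (2 * hfun x) with hw_def
  have hw1 : ∀ x, 1 ≤ w x := fun x => Real.one_le_exp (by nlinarith [hh0 x])
  have hwpos : ∀ x, 0 < w x := fun x => lt_of_lt_of_le one_pos (hw1 x)
  have hwW : ∀ x, w x ≤ Real.exp (2 * H) := fun x =>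
    Real.exp_le_exp.2 (by nlinarith [hhH x])
  have hwc : Continuous w := Real.continuous_exp.comp (continuous_const.mul hhc)
  have hwtop : Tendsto w atTop (nhds 1) := by
    have : Tendsto (fun x => 2 * hfun x) atTop (nhds 0) := by
      simpa using hhtop.const_mul 2
    have h := (Real.continuous_exp.tendsto 0).comp this
    rw [Real.exp_zero] at h
    exact h
  have hgw_int : Integrable (fun y => gf y * w y) := by
    have := hgi.bdd_mul (hwc.aestronglyMeasurable)
      (Eventually.of_forall (fun x => by
        rw [Real.norm_eq_abs, abs_of_pos (hwpos x)]; exact hwW x : ∀ x, ‖w x‖ ≤ Real.exp (2 * H)))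
    exact this.congr (Eventually.of_forall fun y => mul_comm _ _)
  -- the key identity ∫_x^∞ g w = (w x - 1)/2
  have hkey : ∀ x, ∫ y in Set.Ioi x, gf y * w y = (w x - 1) / 2 := by
    intro x
    have hder : ∀ y ∈ Set.Ioi x, HasDerivAt (fun t => -(w t / 2)) (gf y * w y) y := by
      intro y _
      have h1' : HasDerivAt (fun t => 2 * hfun t) (2 * (-gf y)) y := (hhd y).const_mul 2
      have h2' : HasDerivAt (fun t => Real.exp (2 * hfun t))
          (Real.exp (2 * hfun y) * (2 * (-gf y))) y := h1'.exp
      have h3' : HasDerivAt (fun t => -(Real.exp (2 * hfun t) / 2))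
          (-(Real.exp (2 * hfun y) * (2 * (-gf y)) / 2)) y := (h2'.div_const 2).neg
      convert h3' using 1
      show gf y * Real.exp (2 * hfun y) = _
      ring
    have hcont : ContinuousWithinAt (fun t => -(w t / 2)) (Set.Ici x) x :=
      (((hwc.div_const 2).neg).continuousAt).continuousWithinAt
    have htend : Tendsto (fun t => -(w t / 2)) atTop (nhds (-(1/2 : ℝ))) := by
      have := (hwtop.div_const 2).neg
      convert this using 2
    have := integral_Ioi_of_hasDerivAt_of_tendsto hcont hder hgw_int.integrableOn htend
    rw [this]
    ring
  -- kernel continuity and decomposition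
  have hGc : ∀ x, Continuous (fun y => G x y) := by
    intro x
    have : Continuous (fun y : ℝ =>
        2 * Complex.I * k * Complex.exp (2 * Complex.I * k * ((y : ℂ) - (x : ℂ)))
          * ((ρ y : ℂ) - 1)
        + (1/2) * (Complex.exp (2 * Complex.I * k * ((y : ℂ) - (x : ℂ))) - 1)
          * ((deriv ρ y : ℝ) : ℂ)) := by
      apply Continuous.add
      · exact (continuous_const.mul (Complex.continuous_exp.comp
          (continuous_const.mul ((Complex.continuous_ofReal.comp continuous_id).sub
            continuous_const)))).mul
          ((Complex.continuous_ofReal.comp hρ.continuous).sub continuous_const)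
      · exact (continuous_const.mul ((Complex.continuous_exp.comp
          (continuous_const.mul ((Complex.continuous_ofReal.comp continuous_id).sub
            continuous_const))).sub continuous_const)).mul
          (Complex.continuous_ofReal.comp hρ'c)
    exact this.congr fun y => (hG x y).symm
  -- integrability of G x · * m on Ioi x for bounded measurable m
  have hInt : ∀ (m : ℝ → ℂ), Continuous m → ∀ C : ℝ, (∀ y, ‖m y‖ ≤ C) →
      ∀ x, IntegrableOn (fun y => G x y * m y) (Set.Ioi x) := by
    intro m hmc C hmb x
    have hC0 : 0 ≤ C := le_trans (norm_nonneg _) (hmb 0)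
    apply Integrable.mono ((hgi.integrableOn).mul_const C)
      (((hGc x).mul hmc).aestronglyMeasurable)
    filter_upwards [ae_restrict_mem measurableSet_Ioi] with y hy
    have : ‖G x y * m y‖ ≤ gf y * C := by
      rw [norm_mul]
      exact mul_le_mul (hGb x y (le_of_lt hy)) (hmb y) (norm_nonneg _)
        (le_trans (norm_nonneg _) (hGb x y (le_of_lt hy)))
    exact this.trans (le_abs_self _)
  -- basic integral bound
  have hTm1 : ∀ (m : ℝ → ℂ), Continuous m → ∀ C : ℝ, (∀ y, ‖m y‖ ≤ C) →
      ∀ x, ‖∫ y in Set.Ioi x, G x y * m y‖ ≤ C * hfun x := by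
    intro m hmc C hmb x
    have hC0 : 0 ≤ C := le_trans (norm_nonneg _) (hmb 0)
    have : ‖∫ y in Set.Ioi x, G x y * m y‖ ≤ ∫ y in Set.Ioi x, gf y * C := by
      apply norm_integral_le_of_norm_le ((hgi.integrableOn).mul_const C)
      filter_upwards [ae_restrict_mem measurableSet_Ioi] with y hy
      rw [norm_mul]
      exact mul_le_mul (hGb x y (le_of_lt hy)) (hmb y) (norm_nonneg _)
        (le_trans (norm_nonneg _) (hGb x y (le_of_lt hy)))
    rw [integral_mul_const] at this
    calc ‖∫ y in Set.Ioi x, G x y * m y‖ ≤ (∫ y in Set.Ioi x, gf y) * C := this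
      _ = C * hfun x := by simp only [hh_def]; ring
  -- continuity of the integral operator
  have hTmc : ∀ (m : ℝ → ℂ), Continuous m → ∀ C : ℝ, (∀ y, ‖m y‖ ≤ C) →
      Continuous (fun x => 1 + ∫ y in Set.Ioi x, G x y * m y) := by
    intro m hmc C hmb
    have hC0 : 0 ≤ C := le_trans (norm_nonneg _) (hmb 0)
    set A : ℝ → ℂ := fun y =>
      (2 * Complex.I * k * ((ρ y : ℂ) - 1) + (1/2) * ((deriv ρ y : ℝ) : ℂ))
        * Complex.exp (2 * Complex.I * k * (y : ℂ)) with hA_def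
    set B : ℝ → ℂ := fun y => -(1/2) * ((deriv ρ y : ℝ) : ℂ) with hB_def
    have hGAB : ∀ x y : ℝ, G x y
        = Complex.exp (-(2 * Complex.I * k * (x : ℂ))) * A y + B y := by
      intro x y
      rw [hG, hA_def, hB_def]
      have hsplit : (2 * Complex.I * k * ((y : ℂ) - (x : ℂ)))
          = 2 * Complex.I * k * (y:ℂ) + -(2 * Complex.I * k * (x:ℂ)) := by ring
      rw [hsplit, Complex.exp_add]
      ring
    have hAc : Continuous A := by
      apply Continuous.mul
      · exact (continuous_const.mul ((Complex.continuous_ofReal.comp hρ.continuous).sub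
          continuous_const)).add (continuous_const.mul
          (Complex.continuous_ofReal.comp hρ'c))
      · exact Complex.continuous_exp.comp (continuous_const.mul Complex.continuous_ofReal)
    have hBc : Continuous B := continuous_const.mul (Complex.continuous_ofReal.comp hρ'c)
    have hBm_int : Integrable (fun y => B y * m y) := by
      have hB_int : Integrable B := (h2.ofReal).const_mul _
      have := hB_int.bdd_mul hmc.aestronglyMeasurable (Eventually.of_forall hmb)
      exact this.congr (Eventually.of_forall fun y => mul_comm _ _)
    have hexpb : ∀ a : ℝ, ∀ y ∈ Set.Ioi a,
        ‖A y * m y‖ ≤ gf y * (C * Real.exp (2 * k.im * |a|)) := by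
      intro a y hy
      have hy' : a ≤ y := le_of_lt hy
      have hnA : ‖A y‖ ≤ gf y * Real.exp (2 * k.im * |a|) := by
        have hAy : A y = (2 * Complex.I * k * ((ρ y : ℂ) - 1)
            + (1/2) * ((deriv ρ y : ℝ) : ℂ)) * Complex.exp (2 * Complex.I * k * (y : ℂ)) := by
          simp only [hA_def]
        rw [hAy, norm_mul]
        have h1' : ‖2 * Complex.I * k * ((ρ y : ℂ) - 1)
            + (1/2) * ((deriv ρ y : ℝ) : ℂ)‖ ≤ gf y := by
          refine (norm_add_le _ _).trans ?_
          have hr : ‖((ρ y : ℂ) - 1)‖ = ‖ρ y - 1‖ := by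
            rw [show ((ρ y : ℂ) - 1) = ((ρ y - 1 : ℝ) : ℂ) by push_cast; ring,
              Complex.norm_real]
          have e1 : ‖2 * Complex.I * k * ((ρ y : ℂ) - 1)‖ = 2 * ‖k‖ * ‖ρ y - 1‖ := by
            rw [norm_mul, hr, show ‖2 * Complex.I * k‖ = 2 * ‖k‖ by simp]
          have e2 : ‖(1/2 : ℂ) * ((deriv ρ y : ℝ) : ℂ)‖ = (1/2) * ‖deriv ρ y‖ := by
            rw [norm_mul, Complex.norm_real, show ‖(1/2 : ℂ)‖ = 1/2 by norm_num]
          rw [e1, e2]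
          simp only [hgf_def]
          linarith [norm_nonneg (deriv ρ y)]
        have h2' : ‖Complex.exp (2 * Complex.I * k * (y : ℂ))‖
            ≤ Real.exp (2 * k.im * |a|) := by
          rw [Complex.norm_exp, Real.exp_le_exp]
          have hre : (2 * Complex.I * k * (y : ℂ)).re = -(2 * k.im * y) := by
            simp [Complex.mul_re, Complex.mul_im]
            try ring
          rw [hre]
          have h1a : -(2 * k.im * y) ≤ -(2 * k.im * a) := by nlinarith
          have h2a : -(2 * k.im * a) ≤ 2 * k.im * |a| := by
            have := neg_abs_le a
            nlinarith [abs_nonneg a]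
          linarith
        exact mul_le_mul h1' h2' (norm_nonneg _) (hg0 y)
      calc ‖A y * m y‖ = ‖A y‖ * ‖m y‖ := norm_mul _ _
        _ ≤ (gf y * Real.exp (2 * k.im * |a|)) * C :=
            mul_le_mul hnA (hmb y) (norm_nonneg _) (by positivity)
        _ = gf y * (C * Real.exp (2 * k.im * |a|)) := by ring
    have hAm_int : ∀ a, IntegrableOn (fun y => A y * m y) (Set.Ioi a) := by
      intro a
      apply Integrable.mono ((hgi.integrableOn).mul_const (C * Real.exp (2 * k.im * |a|)))
        ((hAc.mul hmc).aestronglyMeasurable)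
      filter_upwards [ae_restrict_mem measurableSet_Ioi] with y hy
      exact (hexpb a y hy).trans (le_abs_self _)
    have hBm_Ioi : ∀ a, IntegrableOn (fun y => B y * m y) (Set.Ioi a) :=
      fun a => hBm_int.integrableOn
    have heq : ∀ x : ℝ, (1 : ℂ) + ∫ y in Set.Ioi x, G x y * m y
        = 1 + (Complex.exp (-(2 * Complex.I * k * (x : ℂ)))
            * ∫ y in Set.Ioi x, A y * m y) + ∫ y in Set.Ioi x, B y * m y := by
      intro x
      have : (fun y => G x y * m y)
          = fun y => Complex.exp (-(2 * Complex.I * k * (x : ℂ))) * (A y * m y)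
            + B y * m y := by
        funext y; rw [hGAB x y]; ring
      rw [this, integral_add ((hAm_int x).const_mul _) (hBm_Ioi x), integral_const_mul]
      ring
    have hcont : Continuous (fun x : ℝ => 1 + (Complex.exp (-(2 * Complex.I * k * (x : ℂ)))
        * ∫ y in Set.Ioi x, A y * m y) + ∫ y in Set.Ioi x, B y * m y) := by
      apply Continuous.add
      · apply Continuous.add continuous_const
        apply Continuous.mul
        · exact Complex.continuous_exp.comp
            ((continuous_const.mul Complex.continuous_ofReal).neg)
        · exact myIoiCont _ (hAc.mul hmc) hAm_int
      · exact myIoiCont _ (hBc.mul hmc) hBm_Ioi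
    exact hcont.congr fun x => (heq x).symm
  -- set up the Banach space of bounded continuous functions and the contraction
  set X := BoundedContinuousFunction ℝ ℂ with hX_def
  have hwne : ∀ x : ℝ, ((w x : ℂ)) ≠ 0 :=
    fun x => Complex.ofReal_ne_zero.2 (ne_of_gt (hwpos x))
  -- Ψ u = w * u
  have hΨc : ∀ u : X, Continuous (fun x => (w x : ℂ) * u x) :=
    fun u => (Complex.continuous_ofReal.comp hwc).mul u.continuous
  have hΨb : ∀ u : X, ∀ x, ‖(w x : ℂ) * u x‖ ≤ Real.exp (2 * H) * ‖u‖ := by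
    intro u x
    rw [norm_mul, Complex.norm_real, Real.norm_eq_abs, abs_of_pos (hwpos x)]
    exact mul_le_mul (hwW x) (u.norm_coe_le_norm x) (norm_nonneg _)
      (Real.exp_nonneg _)
  set S : X → X := fun u => BoundedContinuousFunction.ofNormedAddCommGroup
    (fun x => (1 + ∫ y in Set.Ioi x, G x y * ((w y : ℂ) * u y)) / (w x : ℂ))
    (by
      apply Continuous.div (hTmc _ (hΨc u) _ (hΨb u))
        (Complex.continuous_ofReal.comp hwc) hwne)
    (1 + Real.exp (2 * H) * ‖u‖ * H)
    (by
      intro x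
      rw [norm_div, Complex.norm_real, Real.norm_eq_abs, abs_of_pos (hwpos x)]
      have hb : ‖(1 : ℂ) + ∫ y in Set.Ioi x, G x y * ((w y : ℂ) * u y)‖
          ≤ 1 + Real.exp (2 * H) * ‖u‖ * H := by
        calc ‖(1 : ℂ) + ∫ y in Set.Ioi x, G x y * ((w y : ℂ) * u y)‖
            ≤ ‖(1:ℂ)‖ + ‖∫ y in Set.Ioi x, G x y * ((w y : ℂ) * u y)‖ := norm_add_le _ _
          _ ≤ 1 + Real.exp (2 * H) * ‖u‖ * hfun x := by
              rw [norm_one]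
              have := hTm1 _ (hΨc u) _ (hΨb u) x
              linarith
          _ ≤ 1 + Real.exp (2 * H) * ‖u‖ * H := by
              have h0u : 0 ≤ Real.exp (2 * H) * ‖u‖ := by positivity
              nlinarith [hhH x, hh0 x]
      calc ‖(1 : ℂ) + ∫ y in Set.Ioi x, G x y * ((w y : ℂ) * u y)‖ / w x
          ≤ ‖(1 : ℂ) + ∫ y in Set.Ioi x, G x y * ((w y : ℂ) * u y)‖ :=
            div_le_self (norm_nonneg _) (hw1 x)
        _ ≤ _ := hb) with hS_def
  have hS_apply : ∀ (u : X) (x : ℝ),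
      S u x = (1 + ∫ y in Set.Ioi x, G x y * ((w y : ℂ) * u y)) / (w x : ℂ) := by
    intro u x
    rw [hS_def]
    rfl
  -- contraction estimate
  have hcon : ∀ u u' : X, ∀ x : ℝ, ‖S u x - S u' x‖ ≤ (1/2) * dist u u' := by
    intro u u' x
    have hD0 : 0 ≤ dist u u' := dist_nonneg
    rw [hS_apply, hS_apply, div_sub_div_same, norm_div, Complex.norm_real,
      Real.norm_eq_abs, abs_of_pos (hwpos x)]
    have hsub : (1 + ∫ y in Set.Ioi x, G x y * ((w y : ℂ) * u y))
        - (1 + ∫ y in Set.Ioi x, G x y * ((w y : ℂ) * u' y))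
        = ∫ y in Set.Ioi x, G x y * ((w y : ℂ) * (u y - u' y)) := by
      have := integral_sub (hInt _ (hΨc u) _ (hΨb u) x) (hInt _ (hΨc u') _ (hΨb u') x)
      rw [add_sub_add_left_eq_sub, ← this]
      congr 1
      funext y
      ring
    rw [hsub]
    have hbound : ‖∫ y in Set.Ioi x, G x y * ((w y : ℂ) * (u y - u' y))‖
        ≤ ((w x - 1) / 2) * dist u u' := by
      have h1' : ‖∫ y in Set.Ioi x, G x y * ((w y : ℂ) * (u y - u' y))‖
          ≤ ∫ y in Set.Ioi x, (gf y * w y) * dist u u' := by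
        apply norm_integral_le_of_norm_le ((hgw_int.integrableOn).mul_const _)
        filter_upwards [ae_restrict_mem measurableSet_Ioi] with y hy
        rw [norm_mul, norm_mul, Complex.norm_real, Real.norm_eq_abs,
          abs_of_pos (hwpos y)]
        have hGy := hGb x y (le_of_lt hy)
        have hdy : ‖u y - u' y‖ ≤ dist u u' := by
          rw [← dist_eq_norm]
          exact BoundedContinuousFunction.dist_coe_le_dist y
        have hwy := hwpos y
        have hstep : w y * ‖u y - u' y‖ ≤ w y * dist u u' :=
          mul_le_mul_of_nonneg_left hdy hwy.le
        have := mul_le_mul hGy hstep (by positivity) (hg0 y)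
        nlinarith [this]
      rw [integral_mul_const, hkey x] at h1'
      exact h1'
    calc ‖∫ y in Set.Ioi x, G x y * ((w y : ℂ) * (u y - u' y))‖ / w x
        ≤ ((w x - 1) / 2 * dist u u') / w x :=
          div_le_div_of_nonneg_right hbound (hwpos x).le
      _ ≤ (1/2) * dist u u' := by
          rw [div_le_iff₀ (hwpos x)]
          nlinarith [hw1 x]
  have hS_contr : ContractingWith (1/2 : NNReal) S := by
    constructor
    · rw [← NNReal.coe_lt_coe]
      norm_num
    · apply LipschitzWith.of_dist_le_mul
      intro u u'
      have hC0 : (0:ℝ) ≤ ((1/2 : NNReal) : ℝ) * dist u u' := by positivity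
      rw [BoundedContinuousFunction.dist_le hC0]
      intro x
      rw [dist_eq_norm]
      have := hcon u u' x
      have hco : ((1/2 : NNReal) : ℝ) = 1/2 := by norm_num
      rw [hco]
      exact this
  -- the fixed point
  set u₀ : X := ContractingWith.fixedPoint S hS_contr with hu₀_def
  have hu₀fix : Function.IsFixedPt S u₀ := hS_contr.fixedPoint_isFixedPt
  set m₀ : ℝ → ℂ := fun x => (w x : ℂ) * u₀ x with hm₀_def
  have hm₀c : Continuous m₀ := hΨc u₀
  have hm₀b : ∀ x, ‖m₀ x‖ ≤ Real.exp (2 * H) * ‖u₀‖ := hΨb u₀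
  have hm₀eq : ∀ x, m₀ x = 1 + ∫ y in Set.Ioi x, G x y * m₀ y := by
    intro x
    have : S u₀ x = u₀ x := DFunLike.congr_fun hu₀fix x
    rw [hS_apply] at this
    have hx : (1 + ∫ y in Set.Ioi x, G x y * ((w y : ℂ) * u₀ y)) = (w x : ℂ) * u₀ x := by
      rw [div_eq_iff (hwne x)] at this
      rw [this]; ring
    rw [hm₀_def]
    simp only
    rw [← hx]
  -- tendsto 1
  have hm₀tend : Tendsto m₀ atTop (nhds 1) := by
    rw [tendsto_iff_norm_sub_tendsto_zero]
    have hb : ∀ x, ‖m₀ x - 1‖ ≤ (Real.exp (2 * H) * ‖u₀‖) * hfun x := by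
      intro x
      have : m₀ x - 1 = ∫ y in Set.Ioi x, G x y * m₀ y := by rw [hm₀eq x]; ring
      rw [this]
      exact hTm1 _ hm₀c _ hm₀b x
    have h0 : Tendsto (fun x => (Real.exp (2 * H) * ‖u₀‖) * hfun x) atTop (nhds 0) := by
      simpa using hhtop.const_mul (Real.exp (2 * H) * ‖u₀‖)
    exact squeeze_zero (fun x => norm_nonneg _) hb h0
  refine ⟨m₀, ⟨hm₀c, ⟨Real.exp (2 * H) * ‖u₀‖, hm₀b⟩, hm₀eq, hm₀tend⟩, ?_⟩
  -- uniqueness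
  rintro m' ⟨hc', ⟨C', hb'⟩, heq', -⟩
  set u' : X := BoundedContinuousFunction.ofNormedAddCommGroup
    (fun x => m' x / (w x : ℂ))
    (hc'.div (Complex.continuous_ofReal.comp hwc) hwne)
    C'
    (by
      intro x
      rw [norm_div, Complex.norm_real, Real.norm_eq_abs, abs_of_pos (hwpos x)]
      exact le_trans (div_le_self (norm_nonneg _) (hw1 x)) (hb' x)) with hu'_def
  have hu'_apply : ∀ x, u' x = m' x / (w x : ℂ) := fun x => rfl
  have hΨu' : ∀ y, (w y : ℂ) * u' y = m' y := by
    intro y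
    rw [hu'_apply, mul_comm, div_mul_cancel₀ _ (hwne y)]
  have hu'fix : Function.IsFixedPt S u' := by
    apply BoundedContinuousFunction.ext
    intro x
    rw [hS_apply]
    have hint_eq : (∫ y in Set.Ioi x, G x y * ((w y : ℂ) * u' y))
        = ∫ y in Set.Ioi x, G x y * m' y := by
      congr 1
      funext y
      rw [hΨu' y]
    rw [hint_eq, ← heq' x, hu'_apply]
  have : u' = u₀ := hS_contr.fixedPoint_unique' hu'fix hu₀fix
  funext x
  have h1x : m' x = (w x : ℂ) * u' x := (hΨu' x).symm
  rw [h1x, this]
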